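/- (Multisets, divergent case) Suppose ã_k^{(j)} = C(m_j+k−1, k)·p^{jk}, where the m_j are positive integers, 0 < p < 1, and C denotes the binomial coefficient (the negative-binomial/multiset case). If (c̃_n)_{n≥0} ∈ RT_{p^{-1}}, then for every l ≥ 1, T̃^{(l)}_n/c̃_n → 0 as n → ∞, and consequently for every l ≥ 1 and every tuple (k_1,…,k_l) ∈ ℕ^l, lim_{n→∞} P_n(k_1,…,k_l) = 0; in particular the counting process is divergent. -/

import Mathlib

open Finset Filter Topology

/-- The scaled partition function `c̃_n = ∑_{η ∈ Ω_n} ∏_{j=1}^n b_{k_j}^{(j)}` associated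
with scaled weights `b j k = ã_k^{(j)}` (so `c̃_0 = 1`). -/
noncomputable def ctilOf (b : ℕ → ℕ → ℝ) (n : ℕ) : ℝ :=
  ∑ P : Nat.Partition n, ∏ j ∈ Finset.Icc 1 n, b j (Multiset.count j P.parts)

/-- The tail sums `T̃^{(l)}_m`: the sum over partitions of `m` with all parts `> l` of
`∏_{j=l+1}^m ã_{k_j}^{(j)}` (so `T̃^{(l)}_0 = 1`). -/
noncomputable def TtilOf (b : ℕ → ℕ → ℝ) (l m : ℕ) : ℝ :=
  ∑ P : Nat.Partition m,
    if ∀ j ∈ P.parts, l < j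
    then ∏ j ∈ Finset.Icc (l + 1) m, b j (Multiset.count j P.parts) else 0

/-- The marginal probability `P_n(k_1,…,k_l) = (∏_{j=1}^l ã_{k_j}^{(j)}) T̃^{(l)}_{n-M_l}/c̃_n`
where `M_l = ∑_{j=1}^l j k_j`. -/
noncomputable def PformOf (b : ℕ → ℕ → ℝ) (l : ℕ) (k : Fin l → ℕ) (n : ℕ) : ℝ :=
  (∏ i : Fin l, b ((i : ℕ) + 1) (k i))
    * TtilOf b l (n - ∑ i : Fin l, ((i : ℕ) + 1) * k i) / ctilOf b n

/-- A sequence of nonnegative reals is in `RT_ρ` if `d_n/d_{n+1} → ρ`. -/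
def RT (d : ℕ → ℝ) (ρ : ℝ) : Prop :=
  Tendsto (fun n => d n / d (n + 1)) atTop (nhds ρ)

/-- Scaled weights of a multiset: `ã_k^{(j)} = C(m_j+k−1, k) p^{jk}`
(negative-binomial case). -/
noncomputable def msWt (m : ℕ → ℕ) (p : ℝ) (j k : ℕ) : ℝ :=
  (Nat.choose (m j + k - 1) k : ℝ) * p ^ (j * k)

/- ### Auxiliary material -/

lemma msWt_pos {m : ℕ → ℕ} {p : ℝ} (hm : ∀ j, 1 ≤ m j) (hp0 : 0 < p) (j k : ℕ) :
    0 < msWt m p j k := by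
  have h := hm j
  refine mul_pos ?_ (pow_pos hp0 _)
  exact_mod_cast Nat.choose_pos (by omega)

lemma msWt_zero (m : ℕ → ℕ) (p : ℝ) (j : ℕ) : msWt m p j 0 = 1 := by
  simp [msWt]

/-- adding a part `1` to a partition of `n` -/
def addOnePart {n : ℕ} (P : Nat.Partition n) : Nat.Partition (n + 1) where
  parts := 1 ::ₘ P.parts
  parts_pos := by
    intro i hi
    rcases Multiset.mem_cons.mp hi with h | h
    · omega
    · exact P.parts_pos h
  parts_sum := by
    rw [Multiset.sum_cons, P.parts_sum, add_comm]

lemma addOnePart_inj {n : ℕ} : Function.Injective (@addOnePart n) := by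
  intro P Q h
  have h' : (1 ::ₘ P.parts) = (1 ::ₘ Q.parts) := congrArg Nat.Partition.parts h
  exact Nat.Partition.ext ((Multiset.cons_inj_right 1).mp h')

lemma part_le_of_mem {n : ℕ} (P : Nat.Partition n) {j : ℕ} (hj : j ∈ P.parts) : j ≤ n := by
  have := Multiset.single_le_sum (fun x _ => Nat.zero_le x) j hj
  rwa [P.parts_sum] at this

lemma count_top_eq_zero {n : ℕ} (P : Nat.Partition n) :
    Multiset.count (n + 1) P.parts = 0 := by
  rw [Multiset.count_eq_zero]
  intro h
  have := part_le_of_mem P h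
  omega

lemma choose_step (M k : ℕ) (hM : 1 ≤ M) :
    Nat.choose (M + k - 1) k ≤ Nat.choose (M + (k + 1) - 1) (k + 1) := by
  have h1 : M + (k + 1) - 1 = (M + k - 1) + 1 := by omega
  rw [h1, Nat.choose_succ_succ]
  omega

lemma msWt_step {m : ℕ → ℕ} {p : ℝ} (hm : 1 ≤ m 1) (hp0 : 0 < p) (k : ℕ) :
    p * msWt m p 1 k ≤ msWt m p 1 (k + 1) := by
  unfold msWt
  rw [one_mul, one_mul]
  have hc : (Nat.choose (m 1 + k - 1) k : ℝ) ≤ Nat.choose (m 1 + (k + 1) - 1) (k + 1) := by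
    exact_mod_cast choose_step _ _ hm
  calc p * ((Nat.choose (m 1 + k - 1) k : ℝ) * p ^ k)
      = (Nat.choose (m 1 + k - 1) k : ℝ) * p ^ (k + 1) := by ring
    _ ≤ _ := mul_le_mul_of_nonneg_right hc (by positivity)

/-- weight of a partition -/
noncomputable def wgt (m : ℕ → ℕ) (p : ℝ) {n : ℕ} (P : Nat.Partition n) : ℝ :=
  ∏ j ∈ Finset.Icc 1 n, msWt m p j (Multiset.count j P.parts)

lemma ctil_eq (m : ℕ → ℕ) (p : ℝ) (n : ℕ) :
    ctilOf (msWt m p) n = ∑ P : Nat.Partition n, wgt m p P := rfl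

lemma ctil_pos {m : ℕ → ℕ} {p : ℝ} (hm : ∀ j, 1 ≤ m j) (hp0 : 0 < p) (n : ℕ) :
    0 < ctilOf (msWt m p) n := by
  rw [ctil_eq]
  refine Finset.sum_pos (fun P _ => Finset.prod_pos fun j _ => msWt_pos hm hp0 j _) ?_
  exact Finset.univ_nonempty

lemma Ttil_nonneg {m : ℕ → ℕ} {p : ℝ} (hm : ∀ j, 1 ≤ m j) (hp0 : 0 < p) (l n : ℕ) :
    0 ≤ TtilOf (msWt m p) l n := by
  refine Finset.sum_nonneg fun P _ => ?_
  split
  · exact Finset.prod_nonneg fun j _ => (msWt_pos hm hp0 j _).le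
  · exact le_refl 0

/-- Key pointwise estimate: adding a part 1 multiplies the weight by at least `p`. -/
lemma wgt_addOne_ge {m : ℕ → ℕ} {p : ℝ} (hm : ∀ j, 1 ≤ m j) (hp0 : 0 < p) {n : ℕ}
    (P : Nat.Partition n) : p * wgt m p P ≤ wgt m p (addOnePart P) := by
  have hparts : (addOnePart P).parts = 1 ::ₘ P.parts := rfl
  rcases Nat.eq_zero_or_pos n with hn | hn
  · subst hn
    have h0 : P.parts = 0 := P.partition_zero_parts
    have he : Finset.Icc 1 0 = (∅ : Finset ℕ) := Finset.Icc_eq_empty (by omega)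
    have h := msWt_step (hm 1) hp0 0
    rw [msWt_zero] at h
    simp only [wgt, hparts, h0, he, Finset.prod_empty, mul_one, Finset.Icc_self,
      Finset.prod_singleton, Multiset.count_cons_self, Multiset.count_zero, zero_add]
    simpa using h
  · have hsplit : wgt m p (addOnePart P)
        = (∏ j ∈ Finset.Icc 1 n, msWt m p j (Multiset.count j (1 ::ₘ P.parts)))
          * msWt m p (n + 1) (Multiset.count (n + 1) (1 ::ₘ P.parts)) := by
      rw [wgt, hparts, Finset.prod_Icc_succ_top (by omega)]
    have hcount_top : Multiset.count (n + 1) (1 ::ₘ P.parts) = 0 := by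
      rw [Multiset.count_cons_of_ne (by omega), count_top_eq_zero]
    rw [hsplit, hcount_top, msWt_zero, mul_one]
    have h1mem : (1 : ℕ) ∈ Finset.Icc 1 n := by
      simp [Finset.mem_Icc]; omega
    set R := ∏ j ∈ (Finset.Icc 1 n).erase 1, msWt m p j (Multiset.count j P.parts) with hR
    have hRnn : 0 ≤ R := Finset.prod_nonneg fun j _ => (msWt_pos hm hp0 j _).le
    have hL : (∏ j ∈ Finset.Icc 1 n, msWt m p j (Multiset.count j (1 ::ₘ P.parts)))
        = msWt m p 1 (Multiset.count 1 P.parts + 1) * R := by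
      rw [← Finset.mul_prod_erase _ _ h1mem, Multiset.count_cons_self]
      congr 1
      refine Finset.prod_congr rfl fun j hj => ?_
      rw [Multiset.count_cons_of_ne (Finset.ne_of_mem_erase hj)]
    have hW : wgt m p P = msWt m p 1 (Multiset.count 1 P.parts) * R := by
      rw [wgt, ← Finset.mul_prod_erase _ _ h1mem]
    rw [hL, hW, ← mul_assoc]
    exact mul_le_mul_of_nonneg_right (msWt_step (hm 1) hp0 _) hRnn

/-- The key inequality `p c̃_n + T̃^{(l)}_{n+1} ≤ c̃_{n+1}` for `l ≥ 1`. -/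
lemma key_ineq {m : ℕ → ℕ} {p : ℝ} (hm : ∀ j, 1 ≤ m j) (hp0 : 0 < p) {l : ℕ}
    (hl : 1 ≤ l) (n : ℕ) :
    p * ctilOf (msWt m p) n + TtilOf (msWt m p) l (n + 1) ≤ ctilOf (msWt m p) (n + 1) := by
  classical
  set w : Nat.Partition (n + 1) → ℝ := fun Q => wgt m p Q with hw
  have hwnn : ∀ Q, 0 ≤ w Q := fun Q => Finset.prod_nonneg fun j _ => (msWt_pos hm hp0 j _).le
  set A : Finset (Nat.Partition (n + 1)) :=
    Finset.univ.filter (fun Q => ∀ j ∈ Q.parts, l < j) with hA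
  set B : Finset (Nat.Partition (n + 1)) := Finset.univ.image addOnePart with hB
  -- T = sum over A
  have hT : TtilOf (msWt m p) l (n + 1) = ∑ Q ∈ A, w Q := by
    rw [TtilOf, ← Finset.sum_filter]
    refine Finset.sum_congr rfl fun Q hQ => ?_
    have hQ' : ∀ j ∈ Q.parts, l < j := (Finset.mem_filter.mp hQ).2
    refine Finset.prod_subset (Finset.Icc_subset_Icc_left (by omega)) fun j hj hj' => ?_
    have hj1 : 1 ≤ j ∧ j ≤ n + 1 := Finset.mem_Icc.mp hj
    have hjl : j ≤ l := by
      by_contra h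
      exact hj' (Finset.mem_Icc.mpr ⟨by omega, hj1.2⟩)
    have hc : Multiset.count j Q.parts = 0 := by
      rw [Multiset.count_eq_zero]
      intro hmem
      exact absurd (hQ' j hmem) (by omega)
    rw [hc, msWt_zero]
  -- p * c_n ≤ sum over B
  have hC : p * ctilOf (msWt m p) n ≤ ∑ Q ∈ B, w Q := by
    rw [hB, Finset.sum_image (fun P _ Q _ h => addOnePart_inj h), ctil_eq, Finset.mul_sum]
    exact Finset.sum_le_sum fun P _ => wgt_addOne_ge hm hp0 P
  -- A and B are disjoint
  have hdisj : Disjoint A B := by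
    rw [Finset.disjoint_left]
    intro Q hQA hQB
    obtain ⟨P, -, rfl⟩ := Finset.mem_image.mp hQB
    have h1 : (1 : ℕ) ∈ (addOnePart P).parts := Multiset.mem_cons_self 1 P.parts
    have := (Finset.mem_filter.mp hQA).2 1 h1
    omega
  calc p * ctilOf (msWt m p) n + TtilOf (msWt m p) l (n + 1)
      ≤ (∑ Q ∈ B, w Q) + ∑ Q ∈ A, w Q := by rw [hT]; exact add_le_add_left hC _
    _ = ∑ Q ∈ B ∪ A, w Q := (Finset.sum_union hdisj.symm).symm
    _ ≤ ∑ Q : Nat.Partition (n + 1), w Q :=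
        Finset.sum_le_sum_of_subset_of_nonneg (Finset.subset_univ _)
          (fun Q _ _ => hwnn Q)
    _ = ctilOf (msWt m p) (n + 1) := (ctil_eq m p (n + 1)).symm

/-- **Multisets, divergent case.** If `ã_k^{(j)} = C(m_j+k−1,k) p^{jk}` with `m_j ≥ 1`
integers and `0 < p < 1`, and `(c̃_n) ∈ RT_{p⁻¹}`, then for every `l ≥ 1`,
`T̃^{(l)}_n/c̃_n → 0`, and consequently for every `l ≥ 1` and every tuple
`(k_1,…,k_l) ∈ ℕ^l`, `lim P_n(k_1,…,k_l) = 0`: the counting process is divergent. -/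
theorem stmt14 (m : ℕ → ℕ) (hm : ∀ j, 1 ≤ m j)
    (p : ℝ) (hp0 : 0 < p) (hp1 : p < 1)
    (hRT : RT (ctilOf (msWt m p)) p⁻¹) :
    ∀ l, 1 ≤ l →
      Tendsto (fun n => TtilOf (msWt m p) l n / ctilOf (msWt m p) n) atTop (nhds 0) ∧
      ∀ k : Fin l → ℕ,
        Tendsto (fun n => PformOf (msWt m p) l k n) atTop (nhds 0) := by
  intro l hl
  set c : ℕ → ℝ := ctilOf (msWt m p) with hc
  set T : ℕ → ℝ := TtilOf (msWt m p) l with hT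
  have hcpos : ∀ n, 0 < c n := fun n => ctil_pos hm hp0 n
  have hTnn : ∀ n, 0 ≤ T n := fun n => Ttil_nonneg hm hp0 l n
  have hRT' : Tendsto (fun n => c n / c (n + 1)) atTop (nhds p⁻¹) := hRT
  -- part 1
  have hmain : Tendsto (fun n => T n / c n) atTop (nhds 0) := by
    rw [← tendsto_add_atTop_iff_nat 1]
    have hub : ∀ n : ℕ, T (n + 1) / c (n + 1) ≤ 1 - p * (c n / c (n + 1)) := by
      intro n
      have hk : p * c n + T (n + 1) ≤ c (n + 1) := key_ineq hm hp0 hl n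
      have h1 : T (n + 1) ≤ c (n + 1) - p * c n := by linarith
      have h2 : T (n + 1) / c (n + 1) ≤ (c (n + 1) - p * c n) / c (n + 1) := by
        gcongr
        exact (hcpos (n + 1)).le
      have h3 : (c (n + 1) - p * c n) / c (n + 1) = 1 - p * (c n / c (n + 1))  := by
        rw [sub_div, div_self (ne_of_gt (hcpos (n + 1))), mul_div_assoc]
      rwa [h3] at h2
    have hRHS : Tendsto (fun n => 1 - p * (c n / c (n + 1))) atTop (nhds 0) := by
      have h := (tendsto_const_nhds : Tendsto (fun _ : ℕ => (1 : ℝ)) atTop _).sub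
        (hRT'.const_mul p)
      rwa [mul_inv_cancel₀ (ne_of_gt hp0), sub_self] at h
    refine tendsto_of_tendsto_of_tendsto_of_le_of_le tendsto_const_nhds hRHS ?_ ?_
    · intro n
      exact div_nonneg (hTnn _) (hcpos _).le
    · intro n
      exact hub n
  refine ⟨hmain, fun k => ?_⟩
  set M := ∑ i : Fin l, ((i : ℕ) + 1) * k i with hM
  set C := ∏ i : Fin l, msWt m p ((i : ℕ) + 1) (k i) with hC2
  have hratio : ∀ N : ℕ, Tendsto (fun n => c (n - N) / c n) atTop (nhds (p⁻¹ ^ N)) := by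
    intro N
    induction N with
    | zero =>
      simp only [Nat.sub_zero, pow_zero]
      exact Tendsto.congr (fun n => (div_self (ne_of_gt (hcpos n))).symm) tendsto_const_nhds
    | succ N ih =>
      have hcomp : Tendsto (fun n : ℕ => c (n - (N + 1)) / c (n - (N + 1) + 1)) atTop
          (nhds p⁻¹) := hRT'.comp (tendsto_sub_atTop_nat (N + 1))
      have hmul := hcomp.mul ih
      rw [show p⁻¹ * p⁻¹ ^ N = p⁻¹ ^ (N + 1) by ring] at hmul
      refine hmul.congr' ?_
      filter_upwards [eventually_ge_atTop (N + 1)] with n hn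
      have h1 : n - (N + 1) + 1 = n - N := by omega
      rw [h1, div_mul_div_cancel₀ (ne_of_gt (hcpos (n - N)))]
  have hTc : Tendsto (fun n => T (n - M) / c (n - M)) atTop (nhds 0) :=
    hmain.comp (tendsto_sub_atTop_nat M)
  have hfin := (hTc.mul (hratio M)).const_mul C
  rw [zero_mul, mul_zero] at hfin
  refine hfin.congr fun n => ?_
  have hcan : T (n - M) / c (n - M) * (c (n - M) / c n) = T (n - M) / c n :=
    div_mul_div_cancel₀ (ne_of_gt (hcpos (n - M)))
  rw [hcan]
  simp only [PformOf, ← hc, ← hT, ← hM, ← hC2]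
  rw [mul_div_assoc]
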